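/- In the renewal setup, let 𝕊 be a finite set and let (r_k)_{k≥0} be 𝕊-valued random variables (the mode active on [t_k, t_{k+1})). For each i ∈ 𝕊 let λ_i : ℝ → ℝ be continuous with |λ_i(s)| ≤ L for all s and some constant L > 0, and suppose the per-interval integrals W_k = ∫_{t_{k−1}}^{t_k} λ_{r_{k−1}}(h) dh, k ≥ 1, form an i.i.d. integrable sequence with E[W₁] ≤ w̄. Let μ ≥ 1, c > 0, p > 0, C > 0 be constants with (w̄ + ln μ)/θ < 0. Suppose that for almost every ω there is a continuous trajectory x(ω,·) : [0,∞) → ℝⁿ and functions V_i : [0,∞) × ℝⁿ → ℝ such that: c·‖x(ω,t)‖^p ≤ V_{r(t)}(t, x(ω,t)) for all t ≥ 0, where r(t) = r_k on [t_k, t_{k+1}); 0 < V_{r_0}(0, x(ω,0)) ≤ C; for each k the map t ↦ V_{r_k}(t, x(ω,t)) is continuous on [t_k, t_{k+1}], differentiable on (t_k, t_{k+1}) with derivative ≤ λ_{r_k}(t)·V_{r_k}(t, x(ω,t)); and V_{r_k}(t_k, x(ω,t_k)) ≤ μ·V_{r_{k−1}}(t_k, x(ω,t_k)) for each k ≥ 1.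 Then, almost surely, limsup_{t→∞} (1/t)·ln‖x(t)‖ ≤ (w̄ + ln μ)/(θ·p) < 0; that is, the system is almost surely globally exponentially stable. -/

import Mathlib

/-!
On the `k`-th dwell interval, Grönwall's inequality with the rate `λ_{r_k}` bounds the Lyapunov
function by its value at `t_k` times `exp (∫ λ)`; chaining the jumps gives
`V ≤ C μ^k exp (W_1 + ⋯ + W_k + L S_{k+1})` on `[t_k, t_{k+1})`, hence
`p log ‖x s‖ ≤ log (C / c) + k log μ + W_1 + ⋯ + W_k + L S_{k+1}` with `k = N(s)`.
By the strong law of large numbers `(W_1 + ⋯ + W_k) / k → E W_1 ≤ w̄`, and `t_k / k → θ`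
forces `s / N(s) → θ` and `S_{k+1} / k → 0`, so dividing by `s` gives the exponent
`(w̄ + log μ) / (θ p)`.
-/

open Set Filter MeasureTheory ProbabilityTheory

noncomputable def renewalTime {Ω : Type*} (S : ℕ → Ω → ℝ) (k : ℕ) (ω : Ω) : ℝ :=
  ∑ j ∈ Finset.Icc 1 k, S j ω

open Topology Real Finset

theorem renewalTime_zero {Ω : Type*} (S : ℕ → Ω → ℝ) (ω : Ω) : renewalTime S 0 ω = 0 := by
  simp [renewalTime]

theorem renewalTime_eq_sum_range {Ω : Type*} (S : ℕ → Ω → ℝ) (k : ℕ) (ω : Ω) :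
    renewalTime S k ω = ∑ i ∈ range k, S (i + 1) ω := by
  rw [renewalTime, ← Finset.Ico_add_one_right_eq_Icc, Finset.sum_Ico_eq_sum_range]
  simp [add_comm]

theorem monotone_renewalTime {Ω : Type*} {S : ℕ → Ω → ℝ} {ω : Ω} (hS : ∀ k, 0 ≤ S (k + 1) ω) :
    Monotone (renewalTime S · ω) :=
  monotone_nat_of_le_succ fun k => by
    simp only [renewalTime_eq_sum_range, sum_range_succ]
    linarith [hS k]

theorem le_mul_exp_integral_of_deriv_le_mul {a b : ℝ} {r f : ℝ → ℝ} (hr : Continuous r)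
    (hf : ContinuousOn f (Icc a b)) (hf' : DifferentiableOn ℝ f (Ioo a b))
    (hderiv : ∀ s ∈ Ioo a b, deriv f s ≤ r s * f s) :
    ∀ s ∈ Icc a b, f s ≤ f a * exp (∫ u in a..s, r u) := by
  set R : ℝ → ℝ := fun s => ∫ u in a..s, r u
  have hR : ∀ s, HasDerivAt R (r s) s := fun s => (hr.integral_hasStrictDerivAt a s).hasDerivAt
  have hE : ∀ s, HasDerivAt (fun u => exp (-R u)) (exp (-R s) * -r s) s :=
    fun s => (hR s).neg.exp
  -- the integrating factor `exp (-R)` turns the differential inequality into monotonicity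
  have hanti : AntitoneOn (fun s => f s * exp (-R s)) (Icc a b) := by
    have hfd : ∀ s ∈ Ioo a b, HasDerivAt f (deriv f s) s := fun s hs =>
      (hf'.differentiableAt (isOpen_Ioo.mem_nhds hs)).hasDerivAt
    apply antitoneOn_of_deriv_nonpos (convex_Icc a b)
    · exact hf.mul (continuous_iff_continuousAt.2 fun s => (hE s).continuousAt).continuousOn
    · rw [interior_Icc]
      exact fun s hs => ((hfd s hs).fun_mul (hE s)).differentiableAt.differentiableWithinAt
    · rw [interior_Icc]
      intro s hs
      rw [((hfd s hs).fun_mul (hE s)).deriv]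
      nlinarith [mul_le_mul_of_nonneg_right (hderiv s hs) (exp_pos (-R s)).le]
  intro s hs
  have hle := hanti (left_mem_Icc.2 (hs.1.trans hs.2)) hs hs.1
  simp only [R, intervalIntegral.integral_same, neg_zero, exp_zero, mul_one] at hle
  calc f s = f s * exp (-R s) * exp (R s) := by rw [mul_assoc, ← exp_add]; simp
    _ ≤ f a * exp (R s) := by gcongr

theorem le_mul_pow_mul_exp_sum {a w : ℕ → ℝ} {μ : ℝ} (hμ : 0 ≤ μ)
    (h : ∀ k, a (k + 1) ≤ μ * a k * exp (w k)) (k : ℕ) :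
    a k ≤ a 0 * μ ^ k * exp (∑ i ∈ range k, w i) := by
  induction k with
  | zero => simp
  | succ k ih =>
    calc a (k + 1) ≤ μ * a k * exp (w k) := h k
      _ ≤ μ * (a 0 * μ ^ k * exp (∑ i ∈ range k, w i)) * exp (w k) := by gcongr
      _ = a 0 * μ ^ (k + 1) * exp (∑ i ∈ range (k + 1), w i) := by
        rw [sum_range_succ, exp_add, pow_succ]; ring

-- `κ` is the renewal counting function `N` of the paper.
theorem exists_index_mem_Ico {t : ℕ → ℝ} (ht : Tendsto t atTop atTop) :
    ∃ κ : ℝ → ℕ, ∀ s, t 0 ≤ s → s ∈ Ico (t (κ s)) (t (κ s + 1)) := by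
  classical
  have hex : ∀ s, ∃ j, s < t j := fun s => (ht.eventually_gt_atTop s).exists
  refine ⟨fun s => Nat.find (hex s) - 1, fun s hs => ?_⟩
  have hpos : Nat.find (hex s) ≠ 0 := fun h => (Nat.find_spec (hex s)).not_ge (h ▸ hs)
  refine ⟨not_lt.1 (Nat.find_min (hex s) (Nat.sub_lt (Nat.pos_of_ne_zero hpos) one_pos)), ?_⟩
  rw [Nat.sub_add_cancel (Nat.one_le_iff_ne_zero.2 hpos)]
  exact Nat.find_spec (hex s)

theorem tendsto_succ_div_natCast {t : ℕ → ℝ} {θ : ℝ}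
    (ht : Tendsto (fun k : ℕ => t k / k) atTop (𝓝 θ)) :
    Tendsto (fun k : ℕ => t (k + 1) / k) atTop (𝓝 θ) := by
  have hratio : Tendsto (fun k : ℕ => ((k : ℝ) + 1) / k) atTop (𝓝 1) := by
    have h := (tendsto_one_div_atTop_nhds_zero_nat (𝕜 := ℝ)).const_add 1
    rw [add_zero] at h
    refine h.congr' ?_
    filter_upwards [eventually_ne_atTop 0] with k hk
    field_simp
  have h := (ht.comp (tendsto_add_atTop_nat 1)).mul hratio
  rw [mul_one] at h
  refine h.congr' ?_
  filter_upwards [eventually_ne_atTop 0] with k hk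
  simp only [Function.comp_apply]
  push_cast
  field_simp

theorem tendsto_comp_div_of_mem_Ico {t : ℕ → ℝ} {θ β : ℝ} (hθ : θ ≠ 0)
    (ht : Tendsto (fun k : ℕ => t k / k) atTop (𝓝 θ)) {κ : ℝ → ℕ}
    (hκ : ∀ᶠ s in atTop, s ∈ Ico (t (κ s)) (t (κ s + 1))) {g : ℕ → ℝ}
    (hg : Tendsto (fun k : ℕ => g k / k) atTop (𝓝 β)) :
    Tendsto (fun s => g (κ s) / s) atTop (𝓝 (β / θ)) := by
  have hκ_top : Tendsto κ atTop atTop := by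
    refine tendsto_atTop.2 fun K => ?_
    obtain ⟨B, hB⟩ := ((range K).image (fun j => t (j + 1))).bddAbove
    filter_upwards [hκ, eventually_gt_atTop B] with s hs hsB
    by_contra! hlt
    exact (hs.2.trans_le (hB (mem_image_of_mem _ (mem_range.2 hlt)))).not_gt hsB
  have hdiv : Tendsto (fun s => s / κ s) atTop (𝓝 θ) := by
    refine tendsto_of_tendsto_of_tendsto_of_le_of_le' (ht.comp hκ_top)
      ((tendsto_succ_div_natCast ht).comp hκ_top) ?_ ?_
    · filter_upwards [hκ] with s hs using div_le_div_of_nonneg_right hs.1 (Nat.cast_nonneg _)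
    · filter_upwards [hκ] with s hs using div_le_div_of_nonneg_right hs.2.le (Nat.cast_nonneg _)
  refine ((hg.comp hκ_top).div hdiv hθ).congr' ?_
  filter_upwards [hκ_top.eventually_ne_atTop 0] with s hs
  exact div_div_div_cancel_right₀ (Nat.cast_ne_zero.2 hs) _ _

theorem eventually_div_le_of_forall_mem_Ico {t : ℕ → ℝ} {θ β : ℝ} (hθ : 0 < θ)
    (ht : Tendsto (fun k : ℕ => t k / k) atTop (𝓝 θ)) {g : ℕ → ℝ}
    (hg : Tendsto (fun k : ℕ => g k / k) atTop (𝓝 β)) {q : ℝ → Prop} {f : ℝ → ℝ}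
    (hf : ∀ k, ∀ s ∈ Ico (t k) (t (k + 1)), q s → f s ≤ g k) {ε : ℝ} (hε : 0 < ε) :
    ∀ᶠ s in atTop, q s → f s / s ≤ β / θ + ε := by
  have ht_top : Tendsto t atTop atTop := by
    refine (ht.pos_mul_atTop hθ tendsto_natCast_atTop_atTop).congr' ?_
    filter_upwards [eventually_ne_atTop 0] with k hk
    exact div_mul_cancel₀ _ (Nat.cast_ne_zero.2 hk)
  obtain ⟨κ, hκ⟩ := exists_index_mem_Ico ht_top
  have hκ' : ∀ᶠ s in atTop, s ∈ Ico (t (κ s)) (t (κ s + 1)) :=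
    (eventually_ge_atTop (t 0)).mono hκ
  filter_upwards [hκ', eventually_gt_atTop 0,
    (tendsto_comp_div_of_mem_Ico hθ.ne' ht hκ' hg).eventually_lt_const (lt_add_of_pos_right _ hε)]
    with s hs hs_pos hlt hq
  exact (div_le_div_of_nonneg_right (hf _ s hs hq) hs_pos.le).trans hlt.le

theorem log_le_of_mul_rpow_le {x c p B : ℝ} (hx : 0 < x) (hc : 0 < c) (hp : 0 < p)
    (h : c * x ^ p ≤ B) : log x ≤ (log B - log c) / p := by
  have hlog := log_le_log (by positivity) h
  rw [log_mul hc.ne' (rpow_pos_of_pos hx p).ne', log_rpow hx] at hlog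
  rw [le_div_iff₀ hp]
  linarith

theorem lyapunov_le_mul_pow_mul_exp {t : ℕ → ℝ} {r : ℕ → ℝ → ℝ} {V : ℕ → ℝ → ℝ} {μ L C : ℝ}
    (ht : Monotone t) (hr : ∀ k, Continuous (r k)) (hrL : ∀ k s, |r k s| ≤ L)
    (hL : 0 ≤ L) (hμ : 0 ≤ μ) (hC : 0 ≤ C) (hV0 : V 0 (t 0) ≤ C)
    (hVc : ∀ k, ContinuousOn (V k) (Icc (t k) (t (k + 1))))
    (hVd : ∀ k, DifferentiableOn ℝ (V k) (Ioo (t k) (t (k + 1))))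
    (hVd' : ∀ k, ∀ s ∈ Ioo (t k) (t (k + 1)), deriv (V k) s ≤ r k s * V k s)
    (hjump : ∀ k, V (k + 1) (t (k + 1)) ≤ μ * V k (t (k + 1))) (k : ℕ) :
    ∀ s ∈ Icc (t k) (t (k + 1)), V k s ≤
      C * μ ^ k * exp (∑ i ∈ range k, (∫ u in t i..t (i + 1), r i u) + L * (t (k + 1) - t k)) := by
  have hgr k := le_mul_exp_integral_of_deriv_le_mul (hr k) (hVc k) (hVd k) (hVd' k)
  have hstep : ∀ j, V (j + 1) (t (j + 1)) ≤
      μ * V j (t j) * exp (∫ u in t j..t (j + 1), r j u) := fun j => by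
    rw [mul_assoc]
    exact (hjump j).trans (mul_le_mul_of_nonneg_left (hgr j _ (right_mem_Icc.2 (ht j.le_succ))) hμ)
  have hchain := le_mul_pow_mul_exp_sum (a := fun j => V j (t j)) hμ hstep k
  intro s hs
  have hint : ∫ u in t k..s, r k u ≤ L * (t (k + 1) - t k) := calc
    ∫ u in t k..s, r k u ≤ ∫ _ in t k..s, L := intervalIntegral.integral_mono_on hs.1
        ((hr k).intervalIntegrable _ _) intervalIntegrable_const
        fun u _ => (le_abs_self _).trans (hrL k u)
    _ = L * (s - t k) := by rw [intervalIntegral.integral_const, smul_eq_mul, mul_comm]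
    _ ≤ L * (t (k + 1) - t k) := by gcongr; exact hs.2
  calc V k s ≤ V k (t k) * exp (∫ u in t k..s, r k u) := hgr k s hs
    _ ≤ C * μ ^ k * exp (∑ i ∈ range k, ∫ u in t i..t (i + 1), r i u) *
          exp (∫ u in t k..s, r k u) := by
      gcongr
      exact hchain.trans (by gcongr)
    _ ≤ C * μ ^ k * exp (∑ i ∈ range k, ∫ u in t i..t (i + 1), r i u) *
          exp (L * (t (k + 1) - t k)) := by gcongr
    _ = _ := by rw [exp_add]; ring

theorem eventually_log_norm_div_le_of_lyapunov {E : Type*} [NormedAddCommGroup E]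
    {t : ℕ → ℝ} {r : ℕ → ℝ → ℝ} {V : ℕ → ℝ → ℝ} {x : ℝ → E} {θ m μ c p C L : ℝ}
    (ht : Monotone t) (hθ : 0 < θ) (htθ : Tendsto (fun k : ℕ => t k / k) atTop (𝓝 θ))
    (hm : Tendsto (fun k : ℕ => (∑ i ∈ range k, ∫ u in t i..t (i + 1), r i u) / k) atTop (𝓝 m))
    (hr : ∀ k, Continuous (r k)) (hrL : ∀ k s, |r k s| ≤ L) (hL : 0 ≤ L)
    (hμ : 0 < μ) (hc : 0 < c) (hp : 0 < p) (hC : 0 < C)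
    (hlow : ∀ k, ∀ s ∈ Ico (t k) (t (k + 1)), c * ‖x s‖ ^ p ≤ V k s) (hV0 : V 0 (t 0) ≤ C)
    (hVc : ∀ k, ContinuousOn (V k) (Icc (t k) (t (k + 1))))
    (hVd : ∀ k, DifferentiableOn ℝ (V k) (Ioo (t k) (t (k + 1))))
    (hVd' : ∀ k, ∀ s ∈ Ioo (t k) (t (k + 1)), deriv (V k) s ≤ r k s * V k s)
    (hjump : ∀ k, V (k + 1) (t (k + 1)) ≤ μ * V k (t (k + 1))) {ε : ℝ} (hε : 0 < ε) :
    ∀ᶠ s in atTop, x s ≠ 0 → log ‖x s‖ / s ≤ (m + log μ) / (θ * p) + ε := by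
  set g : ℕ → ℝ := fun k => (log C + k * log μ + (∑ i ∈ range k, ∫ u in t i..t (i + 1), r i u) +
    L * (t (k + 1) - t k) - log c) / p
  have hg : Tendsto (fun k : ℕ => g k / k) atTop (𝓝 ((log μ + m) / p)) := by
    have h := ((((tendsto_const_div_atTop_nhds_zero_nat (log C - log c)).add_const (log μ)).add
      hm).add (((tendsto_succ_div_natCast htθ).sub htθ).const_mul L)).div_const p
    rw [zero_add, sub_self, mul_zero, add_zero] at h
    refine h.congr' ?_
    filter_upwards [eventually_ne_atTop 0] with k hk
    simp only [g]
    field_simp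
    ring
  have hf : ∀ k, ∀ s ∈ Ico (t k) (t (k + 1)), x s ≠ 0 → log ‖x s‖ ≤ g k := by
    intro k s hs hxs
    have hV := lyapunov_le_mul_pow_mul_exp ht hr hrL hL hμ.le hC.le hV0 hVc hVd hVd' hjump k s
      (Ico_subset_Icc_self hs)
    have h := log_le_of_mul_rpow_le (norm_pos_iff.2 hxs) hc hp ((hlow k s hs).trans hV)
    rwa [log_mul (by positivity) (exp_pos _).ne', log_mul hC.ne' (by positivity), log_pow,
      log_exp, ← add_assoc] at h
  have h := eventually_div_le_of_forall_mem_Ico hθ htθ hg hf hε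
  rwa [div_div, add_comm (log μ), mul_comm p] at h

theorem stmt_14_general {Ω : Type*} [MeasurableSpace Ω] (P : Measure Ω) [IsProbabilityMeasure P]
    {𝕊 : Type*} (n : ℕ)
    -- the i.i.d. dwell times
    (S : ℕ → Ω → ℝ)
    (hSindep : iIndepFun S P)
    (hSident : ∀ k ≥ 1, IdentDistrib (S k) (S 1) P P)
    (hSpos : ∀ᵐ ω ∂P, 0 < S 1 ω)
    (hSint : Integrable (S 1) P)
    (θ : ℝ) (hθpos : 0 < θ) (hθ : (∫ ω, S 1 ω ∂P) = θ)
    -- the random modes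
    (r : ℕ → Ω → 𝕊)
    -- the mode-dependent rates, continuous and uniformly bounded
    (lam : 𝕊 → ℝ → ℝ) (hlam : ∀ i, Continuous (lam i))
    (L : ℝ) (hL : 0 < L) (hlamL : ∀ i, ∀ s : ℝ, |lam i s| ≤ L)
    -- the per-interval integrals form an i.i.d. integrable sequence with mean `≤ w̄`
    (W : ℕ → Ω → ℝ)
    (hW : ∀ᵐ ω ∂P, ∀ k, W (k + 1) ω =
      ∫ h in (renewalTime S k ω)..(renewalTime S (k + 1) ω), lam (r k ω) h)
    (hWindep : iIndepFun W P)
    (hWident : ∀ k ≥ 1, IdentDistrib (W k) (W 1) P P)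
    (hWint : Integrable (W 1) P)
    (wbar : ℝ) (hwbar : (∫ ω, W 1 ω ∂P) ≤ wbar)
    -- constants
    (μ c p C : ℝ) (hμ : 1 ≤ μ) (hc : 0 < c) (hp : 0 < p) (hC : 0 < C)
    -- pathwise trajectory and Lyapunov functions
    (x : Ω → ℝ → EuclideanSpace ℝ (Fin n))
    (V : Ω → 𝕊 → ℝ → EuclideanSpace ℝ (Fin n) → ℝ)
    (hlow : ∀ᵐ ω ∂P, ∀ k, ∀ s ∈ Set.Ico (renewalTime S k ω) (renewalTime S (k + 1) ω),
      c * ‖x ω s‖ ^ p ≤ V ω (r k ω) s (x ω s))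
    (hV0 : ∀ᵐ ω ∂P, 0 < V ω (r 0 ω) 0 (x ω 0) ∧ V ω (r 0 ω) 0 (x ω 0) ≤ C)
    -- Lyapunov condition (ii)
    (hV_cont : ∀ᵐ ω ∂P, ∀ k, ContinuousOn (fun s => V ω (r k ω) s (x ω s))
      (Set.Icc (renewalTime S k ω) (renewalTime S (k + 1) ω)))
    (hV_diff : ∀ᵐ ω ∂P, ∀ k, DifferentiableOn ℝ (fun s => V ω (r k ω) s (x ω s))
      (Set.Ioo (renewalTime S k ω) (renewalTime S (k + 1) ω)))
    (hV_deriv : ∀ᵐ ω ∂P, ∀ k,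
      ∀ s ∈ Set.Ioo (renewalTime S k ω) (renewalTime S (k + 1) ω),
        deriv (fun s' => V ω (r k ω) s' (x ω s')) s ≤
          lam (r k ω) s * V ω (r k ω) s (x ω s))
    -- Lyapunov condition (iii)
    (hjump : ∀ᵐ ω ∂P, ∀ k,
      V ω (r (k + 1) ω) (renewalTime S (k + 1) ω) (x ω (renewalTime S (k + 1) ω)) ≤
        μ * V ω (r k ω) (renewalTime S (k + 1) ω) (x ω (renewalTime S (k + 1) ω))) :
    ∀ᵐ ω ∂P, ∀ ε > (0 : ℝ), ∀ᶠ s in Filter.atTop,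
      x ω s ≠ 0 → Real.log ‖x ω s‖ / s ≤ (wbar + Real.log μ) / (θ * p) + ε := by
  have hSL : ∀ᵐ ω ∂P, Tendsto (fun k : ℕ => renewalTime S k ω / k) atTop (𝓝 θ) := by
    have h := strong_law_ae_real (fun i => S (i + 1)) hSint
      (fun i j hij => hSindep.indepFun (by omega)) (fun i => hSident (i + 1) (by omega))
    rw [hθ] at h
    simpa only [renewalTime_eq_sum_range] using h
  have hWL := strong_law_ae_real (fun i => W (i + 1)) hWint
    (fun i j hij => hWindep.indepFun (by omega)) (fun i => hWident (i + 1) (by omega))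
  have hSnonneg : ∀ᵐ ω ∂P, ∀ k, 0 ≤ S (k + 1) ω := ae_all_iff.2 fun k =>
    (hSident (k + 1) (by omega)).symm.ae_snd (p := fun s => 0 ≤ s) measurableSet_Ici
      (hSpos.mono fun _ h => h.le)
  filter_upwards [hSL, hWL, hSnonneg, hW, hlow, hV0, hV_cont, hV_diff, hV_deriv, hjump]
    with ω hSω hWω hSω_nonneg hWω_eq hlowω hV0ω hVcω hVdω hVd'ω hjumpω ε hε
  have hm : Tendsto (fun k : ℕ => (∑ i ∈ range k,
      ∫ u in renewalTime S i ω..renewalTime S (i + 1) ω, lam (r i ω) u) / k)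
      atTop (𝓝 (∫ ω, W 1 ω ∂P)) := by
    simpa only [hWω_eq] using hWω
  refine (eventually_log_norm_div_le_of_lyapunov (t := (renewalTime S · ω))
    (r := fun k => lam (r k ω)) (V := fun k s => V ω (r k ω) s (x ω s)) (x := x ω)
    (monotone_renewalTime hSω_nonneg) hθpos hSω hm (fun _ => hlam _) (fun _ => hlamL _) hL.le
    (by linarith) hc hp hC hlowω (by simpa [renewalTime_zero] using hV0ω.2) hVcω hVdω hVd'ω
    hjumpω hε).mono fun s hs hxs => (hs hxs).trans ?_
  gcongr

/-- Almost-sure global exponential stability for time-varying systems under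
renewal-process switching: with mode-dependent indefinite Lyapunov rates `λ_i` whose
per-dwell-interval integrals `W_k` are i.i.d. with mean at most `w̄`, and a common jump
factor `μ` at switching times, if `(w̄ + ln μ)/θ < 0` then almost surely
`limsup (1/t) ln ‖x t‖ ≤ (w̄ + ln μ)/(θ·p) < 0` (in ε-form, ignoring times where
`x t = 0`). -/
theorem stmt_14 {Ω : Type*} [MeasurableSpace Ω] (P : Measure Ω) [IsProbabilityMeasure P]
    {𝕊 : Type*} [Fintype 𝕊] (n : ℕ)
    -- the i.i.d. dwell times
    (S : ℕ → Ω → ℝ) (hSmeas : ∀ k, Measurable (S k))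
    (hSindep : iIndepFun S P)
    (hSident : ∀ k ≥ 1, IdentDistrib (S k) (S 1) P P)
    (hSpos : ∀ᵐ ω ∂P, 0 < S 1 ω)
    (hSint : Integrable (S 1) P)
    (θ : ℝ) (hθpos : 0 < θ) (hθ : (∫ ω, S 1 ω ∂P) = θ)
    -- the random modes
    (r : ℕ → Ω → 𝕊)
    -- the mode-dependent rates, continuous and uniformly bounded
    (lam : 𝕊 → ℝ → ℝ) (hlam : ∀ i, Continuous (lam i))
    (L : ℝ) (hL : 0 < L) (hlamL : ∀ i, ∀ s : ℝ, |lam i s| ≤ L)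
    -- the per-interval integrals form an i.i.d. integrable sequence with mean `≤ w̄`
    (W : ℕ → Ω → ℝ) (hWmeas : ∀ k, Measurable (W k))
    (hW : ∀ᵐ ω ∂P, ∀ k, W (k + 1) ω =
      ∫ h in (renewalTime S k ω)..(renewalTime S (k + 1) ω), lam (r k ω) h)
    (hWindep : iIndepFun W P)
    (hWident : ∀ k ≥ 1, IdentDistrib (W k) (W 1) P P)
    (hWint : Integrable (W 1) P)
    (wbar : ℝ) (hwbar : (∫ ω, W 1 ω ∂P) ≤ wbar)
    -- constants
    (μ c p C : ℝ) (hμ : 1 ≤ μ) (hc : 0 < c) (hp : 0 < p) (hC : 0 < C)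
    (hdrift : (wbar + Real.log μ) / θ < 0)
    -- pathwise trajectory and Lyapunov functions
    (x : Ω → ℝ → EuclideanSpace ℝ (Fin n))
    (V : Ω → 𝕊 → ℝ → EuclideanSpace ℝ (Fin n) → ℝ)
    (hx_cont : ∀ᵐ ω ∂P, ContinuousOn (x ω) (Set.Ici 0))
    (hlow : ∀ᵐ ω ∂P, ∀ k, ∀ s ∈ Set.Ico (renewalTime S k ω) (renewalTime S (k + 1) ω),
      c * ‖x ω s‖ ^ p ≤ V ω (r k ω) s (x ω s))
    (hV0 : ∀ᵐ ω ∂P, 0 < V ω (r 0 ω) 0 (x ω 0) ∧ V ω (r 0 ω) 0 (x ω 0) ≤ C)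
    -- Lyapunov condition (ii)
    (hV_cont : ∀ᵐ ω ∂P, ∀ k, ContinuousOn (fun s => V ω (r k ω) s (x ω s))
      (Set.Icc (renewalTime S k ω) (renewalTime S (k + 1) ω)))
    (hV_diff : ∀ᵐ ω ∂P, ∀ k, DifferentiableOn ℝ (fun s => V ω (r k ω) s (x ω s))
      (Set.Ioo (renewalTime S k ω) (renewalTime S (k + 1) ω)))
    (hV_deriv : ∀ᵐ ω ∂P, ∀ k,
      ∀ s ∈ Set.Ioo (renewalTime S k ω) (renewalTime S (k + 1) ω),
        deriv (fun s' => V ω (r k ω) s' (x ω s')) s ≤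
          lam (r k ω) s * V ω (r k ω) s (x ω s))
    -- Lyapunov condition (iii)
    (hjump : ∀ᵐ ω ∂P, ∀ k,
      V ω (r (k + 1) ω) (renewalTime S (k + 1) ω) (x ω (renewalTime S (k + 1) ω)) ≤
        μ * V ω (r k ω) (renewalTime S (k + 1) ω) (x ω (renewalTime S (k + 1) ω))) :
    ∀ᵐ ω ∂P, ∀ ε > (0 : ℝ), ∀ᶠ s in Filter.atTop,
      x ω s ≠ 0 → Real.log ‖x ω s‖ / s ≤ (wbar + Real.log μ) / (θ * p) + ε :=
  stmt_14_general P n S hSindep hSident hSpos hSint θ hθpos hθ r lam hlam L hL hlamL W hW hWindep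
    hWident hWint wbar hwbar μ c p C hμ hc hp hC x V hlow hV0 hV_cont hV_diff hV_deriv hjump
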